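/- For every integer k ≥ 7, h_{k,k+6} = (256/45)k^6 - (992/15)k^5 + (4292/9)k^4 - (13427/6)k^3 + (617753/90)k^2 - (189503/15)k + 10672 (equivalently, 90·h_{k,k+6} = 512k^6 - 5952k^5 + 42920k^4 - 201405k^3 + 617753k^2 - 1137018k + 960480). -/

import Mathlib

/-- Integer binomial coefficient with the convention
`C(a,b) = a!/(b!(a-b)!)` if `0 ≤ b ≤ a` and `C(a,b) = 0` otherwise. -/
def ichoose (a b : ℤ) : ℤ := if 0 ≤ b ∧ b ≤ a then (a.toNat.choose b.toNat : ℤ) else 0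

/-- The Delannoy numbers `D(n,m) = ∑_{k=0}^m C(m,k) C(n+m-k, m)`. -/
def delannoy (n m : ℕ) : ℕ :=
  ∑ k ∈ Finset.range (m + 1), Nat.choose m k * Nat.choose (n + m - k) m

/-- `h k n = ∑_{i=0}^{k-1} D(k-1-i, i) C(n-i+k-2, 2k-2)` is the number of
column-convex polyominoes with `k` columns and area `n`. -/
def ccPoly (k n : ℕ) : ℤ :=
  ∑ i ∈ Finset.range k,
    (delannoy (k - 1 - i) i : ℤ) * ichoose ((n : ℤ) - i + k - 2) (2 * (k : ℤ) - 2)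

/-- `r k m = ∑_{i=k}^{m-k} h_{k,i} h_{k,m-i}` is the number of plateau polycubes
of width `k` and lateral area `m`. -/
def plateau (k m : ℕ) : ℤ :=
  ∑ i ∈ Finset.Icc k (m - k), ccPoly k i * ccPoly k (m - i)

/-! When the area exceeds the width `k` by `j < k`, the binomial `C(n - i + k - 2, 2k - 2)` in
`h_{k,n}` vanishes for `i > j`, so `h_{k,k+j}` is a sum of `j + 1` products
`D(k-1-i, i) · C(2k-2+(j-i), j-i)`, each a polynomial in `k` of degree `j`.
For `j = 6` expanding these seven products gives the formula. -/

open Finset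

lemma ichoose_natCast (a b : ℕ) : ichoose a b = a.choose b := by
  unfold ichoose
  split_ifs with h
  · simp
  · rw [Nat.choose_eq_zero_of_lt (by omega), Nat.cast_zero]

lemma ichoose_eq_zero_of_lt {a b : ℤ} (h : a < b) : ichoose a b = 0 :=
  if_neg fun hb => by omega

lemma delannoy_eq_sum (n m : ℕ) :
    delannoy n m = ∑ t ∈ range (m + 1), m.choose t * (n + (m - t)).choose m :=
  sum_congr rfl fun t ht => by rw [Nat.add_sub_assoc (by simpa [Nat.lt_succ_iff] using ht)]

lemma ccPoly_add_eq_sum_antidiagonal (m j : ℕ) :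
    ccPoly (m + j + 1) (m + j + 1 + j) =
      ∑ p ∈ antidiagonal j, (delannoy (m + p.2) p.1 : ℤ) * (2 * (m + j) + p.2).choose p.2 := by
  rw [ccPoly, Nat.sum_antidiagonal_eq_sum_range_succ_mk]
  refine (sum_subset (range_subset_range.mpr (by omega)) (fun i hi hij => ?_)).symm.trans
    (sum_congr rfl fun i hi => ?_)
  · simp only [mem_range, not_lt] at hi hij
    rw [ichoose_eq_zero_of_lt (by push_cast; omega), mul_zero]
  · simp only [mem_range] at hi
    have harg : ((m + j + 1 + j : ℕ) : ℤ) - i + (m + j + 1 : ℕ) - 2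
        = ((2 * (m + j) + (j - i) : ℕ) : ℤ) := by
      push_cast; omega
    have hlow : 2 * ((m + j + 1 : ℕ) : ℤ) - 2 = ((2 * (m + j) : ℕ) : ℤ) := by push_cast; ring
    rw [harg, hlow, ichoose_natCast, Nat.choose_symm_add,
      show m + j + 1 - 1 - i = m + (j - i) by omega]

theorem ccPoly_area_width_add_six (k : ℕ) (hk : 7 ≤ k) :
    (ccPoly k (k + 6) : ℚ)
      = 256 / 45 * (k : ℚ) ^ 6 - 992 / 15 * (k : ℚ) ^ 5 + 4292 / 9 * (k : ℚ) ^ 4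
          - 13427 / 6 * (k : ℚ) ^ 3 + 617753 / 90 * (k : ℚ) ^ 2 - 189503 / 15 * (k : ℚ)
          + 10672 := by
  obtain ⟨m, rfl⟩ : ∃ m, k = m + 6 + 1 := ⟨k - 7, by omega⟩
  rw [ccPoly_add_eq_sum_antidiagonal]
  simp only [Nat.sum_antidiagonal_succ, Nat.antidiagonal_zero, sum_singleton, delannoy_eq_sum,
    sum_range_succ, sum_range_zero]
  push_cast [Nat.cast_choose_eq_descPochhammer_div]
  simp only [descPochhammer_succ_eval, descPochhammer_zero, Polynomial.eval_one,
    Nat.factorial_succ, Nat.factorial_zero]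
  push_cast
  ring
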